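/- There are infinitely many n ∈ ℕ such that h_{n+i} < 0 for all i = 0, 1, 2, 3, 4. -/

import Mathlib

/-!
The even-indexed terms `g n = h (2n)` satisfy `g (n+2) = g (n+1) - t(n+1) t(n+2) g n`, and the
odd ones are `h (2n+3) = -t(n+1) g n`. Because the Thue–Morse sequence has no three equal
consecutive values, `g` stays negative for `n ≥ 1`: when the coefficient `t(n+1) t(n+2)` is `1`
the previous one was `-1`, so `g` had just decreased. An odd term `h (2m+1)` is then negative
exactly when `t m = -1`, and `t m = t (m+1) = -1` holds for `m = 4b+1` whenever `t b = 1`,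
e.g. for `b = 3 * 2^j`.
-/

def t (n : ℕ) : ℤ := (-1) ^ ((Nat.digits 2 n).sum)

def h : ℕ → ℤ
  | 0 => 0
  | 1 => 1
  | (n + 2) => t (n + 2) * h (n + 1) + h n

lemma t_zero : t 0 = 1 := by simp [t]

lemma t_two_mul (n : ℕ) : t (2 * n) = t n := by
  rcases Nat.eq_zero_or_pos n with rfl | hn
  · rfl
  · rw [t, t, Nat.digits_def' one_lt_two (by omega)]
    simp

lemma t_two_mul_add_one (n : ℕ) : t (2 * n + 1) = -t n := by
  rw [t, t, Nat.digits_def' one_lt_two (by omega)]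
  simp [Nat.add_div, pow_add]

lemma t_mul_self (n : ℕ) : t n * t n = 1 := by
  rw [t, ← pow_add, ← two_mul, pow_mul, neg_one_sq, one_pow]

lemma t_mul_eq_one_or_eq_neg_one (a b : ℕ) : t a * t b = 1 ∨ t a * t b = -1 := by
  simpa only [t, ← pow_add] using neg_one_pow_eq_or ℤ _

/-- The Thue–Morse sequence has no three equal consecutive values. -/
lemma t_succ_mul_t_succ_succ_of_mul_eq_one {n : ℕ} (hn : t n * t (n + 1) = 1) :
    t (n + 1) * t (n + 2) = -1 := by
  rcases Nat.even_or_odd' n with ⟨k, rfl | rfl⟩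
  · rw [t_two_mul_add_one, t_two_mul] at hn
    linarith [t_mul_self k]
  · rw [show 2 * k + 1 + 1 = 2 * (k + 1) by ring, show 2 * k + 1 + 2 = 2 * (k + 1) + 1 by ring,
      t_two_mul_add_one, t_two_mul]
    linarith [t_mul_self (k + 1)]

lemma t_three_mul_two_pow (j : ℕ) : t (3 * 2 ^ j) = 1 := by
  induction j with
  | zero => rw [pow_zero, mul_one, show 3 = 2 * 1 + 1 from rfl, t_two_mul_add_one,
      show 1 = 2 * 0 + 1 from rfl, t_two_mul_add_one, t_zero, neg_neg]
  | succ j ih => rwa [pow_succ, ← mul_assoc, mul_comm, t_two_mul]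

lemma t_four_mul_add_one (b : ℕ) : t (4 * b + 1) = -t b := by
  rw [show 4 * b = 2 * (2 * b) by ring, t_two_mul_add_one, t_two_mul]

lemma t_four_mul_add_two (b : ℕ) : t (4 * b + 2) = -t b := by
  rw [show 4 * b + 2 = 2 * (2 * b + 1) by ring, t_two_mul, t_two_mul_add_one]

lemma h_two_mul_add_three (n : ℕ) : h (2 * n + 3) = -t (n + 1) * h (2 * n) := by
  have e3 : t (2 * n + 3) = -t (n + 1) := by
    rw [show 2 * n + 3 = 2 * (n + 1) + 1 by ring, t_two_mul_add_one]
  have e2 : t (2 * n + 2) = t (n + 1) := by rw [show 2 * n + 2 = 2 * (n + 1) by ring, t_two_mul]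
  rw [h, e3, h, e2]
  linear_combination (-h (2 * n + 1)) * t_mul_self (n + 1)

lemma h_two_mul_add_four (n : ℕ) :
    h (2 * n + 4) = h (2 * n + 2) - t (n + 1) * t (n + 2) * h (2 * n) := by
  rw [h, show 2 * n + 4 = 2 * (n + 2) by ring, t_two_mul, h_two_mul_add_three]
  ring

lemma h_two_mul_add_four_neg {n : ℕ} (h₀ : h (2 * n) < 0) (h₁ : h (2 * n + 2) < 0)
    (hdec : t (n + 1) * t (n + 2) = 1 → h (2 * n + 2) < h (2 * n)) : h (2 * n + 4) < 0 := by
  rw [h_two_mul_add_four]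
  rcases t_mul_eq_one_or_eq_neg_one (n + 1) (n + 2) with hε | hε <;> rw [hε]
  · linarith [hdec hε]
  · linarith

lemma h_two_mul_add_four_lt_of_mul_eq_one {n : ℕ} (h₀ : h (2 * n) < 0)
    (hε : t (n + 2) * t (n + 3) = 1) : h (2 * n + 4) < h (2 * n + 2) := by
  have hε' : t (n + 1) * t (n + 2) = -1 := by
    rcases t_mul_eq_one_or_eq_neg_one (n + 1) (n + 2) with h' | h'
    · have := t_succ_mul_t_succ_succ_of_mul_eq_one h'
      rw [hε] at this
      norm_num at this
    · exact h'
  rw [h_two_mul_add_four, hε']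
  linarith

lemma h_two_mul_add_two_invariant (n : ℕ) :
    h (2 * n + 2) < 0 ∧ h (2 * n + 4) < 0 ∧
      (t (n + 2) * t (n + 3) = 1 → h (2 * n + 4) < h (2 * n + 2)) := by
  induction n with
  | zero => norm_num [h, t]
  | succ n ih =>
    obtain ⟨h₀, h₁, hdec⟩ := ih
    exact ⟨h₁, h_two_mul_add_four_neg h₀ h₁ hdec,
      h_two_mul_add_four_lt_of_mul_eq_one h₀⟩

lemma h_two_mul_add_two_neg (n : ℕ) : h (2 * n + 2) < 0 := (h_two_mul_add_two_invariant n).1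

lemma h_two_mul_add_neg_of_t_eq_neg_one {m : ℕ} (hm : 2 ≤ m) (ht : t m = -1)
    (ht' : t (m + 1) = -1) {i : ℕ} (hi : i ≤ 4) : h (2 * m + i) < 0 := by
  obtain ⟨k, rfl⟩ : ∃ k, m = k + 2 := ⟨m - 2, by omega⟩
  interval_cases i
  · exact h_two_mul_add_two_neg (k + 1)
  · rw [show 2 * (k + 2) + 1 = 2 * (k + 1) + 3 by ring, h_two_mul_add_three, ht, neg_neg, one_mul]
    exact h_two_mul_add_two_neg k
  · exact h_two_mul_add_two_neg (k + 2)
  · rw [h_two_mul_add_three, ht', neg_neg, one_mul]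
    exact h_two_mul_add_two_neg (k + 1)
  · exact h_two_mul_add_two_neg (k + 3)

theorem stmt5 : {n : ℕ | ∀ i : ℕ, i ≤ 4 → h (n + i) < 0}.Infinite := by
  refine Set.infinite_of_injective_forall_mem (f := fun j : ℕ => 2 * (4 * (3 * 2 ^ j) + 1))
    (fun a b hab => Nat.pow_right_injective le_rfl (by simpa using hab)) fun j i hi => ?_
  have hb := t_three_mul_two_pow j
  exact h_two_mul_add_neg_of_t_eq_neg_one (by have := j.one_le_two_pow; omega)
    (by rw [t_four_mul_add_one, hb]) (by rw [t_four_mul_add_two, hb]) hi
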